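/- For every integer k ≥ 1 there is at most one prime p such that v_p(k+1) ≥ v_p(L_k) ≥ 1; that is, if p and q are primes with v_p(k+1) ≥ v_p(L_k) ≥ 1 and v_q(k+1) ≥ v_q(L_k) ≥ 1, then p = q. -/

import Mathlib

/-!
If `p ^ a` is the exact power of `p` in `L_k`, then `p ^ (a + 1) > k`, so `k + 1 ≤ p ^ (a + 1)`.
When moreover `p ^ a ∣ k + 1` and `q ^ b ∣ k + 1` for another prime `q` with `b ≥ 1`, coprimality
gives `q ^ b * p ^ a ≤ k + 1 ≤ p * p ^ a`, hence `q ≤ q ^ b ≤ p`. Exchanging the roles of `p`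
and `q` gives `p ≤ q`, contradicting `p ≠ q`.
-/

/-- `L k = lcm (1, 2, …, k)`. -/
def Lk (k : ℕ) : ℕ := (Finset.Icc 1 k).lcm id

theorem dvd_Lk {k m : ℕ} (hm : 1 ≤ m) (hmk : m ≤ k) : m ∣ Lk k :=
  Finset.dvd_lcm (Finset.mem_Icc.mpr ⟨hm, hmk⟩)

theorem Lk_ne_zero (k : ℕ) : Lk k ≠ 0 := by
  rw [Lk, Ne, Finset.lcm_eq_zero_iff]
  simp

theorem lt_pow_succ_padicValNat_Lk {p : ℕ} (hp : p.Prime) (k : ℕ) :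
    k < p ^ (padicValNat p (Lk k) + 1) := by
  have := Fact.mk hp
  by_contra! hle
  have hdvd : p ^ (padicValNat p (Lk k) + 1) ∣ Lk k := dvd_Lk (Nat.one_le_pow _ _ hp.pos) hle
  have := (padicValNat_dvd_iff_le (Lk_ne_zero k)).mp hdvd
  omega

theorem le_of_mul_pow_dvd_succ_of_lt_pow_succ {m p a n : ℕ} (hp : 0 < p)
    (hdvd : m * p ^ a ∣ n + 1) (hn : n < p ^ (a + 1)) : m ≤ p := by
  have hle : m * p ^ a ≤ p * p ^ a :=
    calc m * p ^ a ≤ n + 1 := Nat.le_of_dvd n.succ_pos hdvd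
      _ ≤ p ^ (a + 1) := hn
      _ = p * p ^ a := pow_succ' p a
  exact Nat.le_of_mul_le_mul_right hle (pow_pos hp a)

theorem le_of_padicValNat_Lk_le_padicValNat_succ {k p q : ℕ} (hp : p.Prime) (hq : q.Prime)
    (hne : p ≠ q) (hp2 : padicValNat p (Lk k) ≤ padicValNat p (k + 1))
    (hq1 : 1 ≤ padicValNat q (Lk k)) (hq2 : padicValNat q (Lk k) ≤ padicValNat q (k + 1)) :
    q ≤ p := by
  set a := padicValNat p (Lk k)
  set b := padicValNat q (Lk k)
  have hpa : p ^ a ∣ k + 1 := (pow_dvd_pow p hp2).trans pow_padicValNat_dvd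
  have hqb : q ^ b ∣ k + 1 := (pow_dvd_pow q hq2).trans pow_padicValNat_dvd
  have hcop : Nat.Coprime (q ^ b) (p ^ a) :=
    Nat.Coprime.pow b a ((Nat.coprime_primes hq hp).mpr hne.symm)
  have hqb_le : q ^ b ≤ p := le_of_mul_pow_dvd_succ_of_lt_pow_succ hp.pos
    (hcop.mul_dvd_of_dvd_of_dvd hqb hpa) (lt_pow_succ_padicValNat_Lk hp k)
  exact (Nat.le_self_pow (by omega) q).trans hqb_le

theorem at_most_one_prime_vp_succ_ge_vp_Lk_general (k : ℕ)
    (p q : ℕ) (hp : p.Prime) (hq : q.Prime)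
    (hp1 : 1 ≤ padicValNat p (Lk k))
    (hp2 : padicValNat p (Lk k) ≤ padicValNat p (k + 1))
    (hq1 : 1 ≤ padicValNat q (Lk k))
    (hq2 : padicValNat q (Lk k) ≤ padicValNat q (k + 1)) :
    p = q := by
  by_contra hne
  exact hne (le_antisymm (le_of_padicValNat_Lk_le_padicValNat_succ hq hp (Ne.symm hne) hq2 hp1 hp2)
    (le_of_padicValNat_Lk_le_padicValNat_succ hp hq hne hp2 hq1 hq2))

/-- (Farhi–Kane) For every `k ≥ 1` there is at most one prime `p` with
`v_p (k + 1) ≥ v_p (L_k) ≥ 1`. -/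
theorem at_most_one_prime_vp_succ_ge_vp_Lk (k : ℕ) (hk : 1 ≤ k)
    (p q : ℕ) (hp : p.Prime) (hq : q.Prime)
    (hp1 : 1 ≤ padicValNat p (Lk k))
    (hp2 : padicValNat p (Lk k) ≤ padicValNat p (k + 1))
    (hq1 : 1 ≤ padicValNat q (Lk k))
    (hq2 : padicValNat q (Lk k) ≤ padicValNat q (k + 1)) :
    p = q :=
  at_most_one_prime_vp_succ_ge_vp_Lk_general k p q hp hq hp1 hp2 hq1 hq2
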